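/- arXiv:math/0411287 — 2 statements merged into one kernel-verified Lean document; each statement's English description precedes it below -/
import Mathlib

section
/- Let η be a standard normal random variable and k ≥ 2 an integer. Then there exists a constant C̄ > 0 such that for all u > 0, P(|H_k(η)| > u) ≥ C̄·exp(−u^{2/k}/2)/(u^{1/k}+1), where H_k is the k-th Hermite polynomial with leading coefficient 1. -/
set_option maxHeartbeats 1000000


open MeasureTheory ProbabilityTheory Polynomial Real

lemma herm_approx (k : ℕ) (hk : 2 ≤ k) : ∃ C₀ : ℝ, 0 ≤ C₀ ∧ ∀ x : ℝ, 1 ≤ x →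
    |(Polynomial.aeval x) (Polynomial.hermite k) - x ^ k| ≤ C₀ * x ^ (k - 2) := by
  set p : ℝ[X] := ((hermite k).map (Int.castRingHom ℝ)) - Polynomial.X ^ k with hp
  have hdeg : p.natDegree < k - 1 := by
    rw [Nat.lt_iff_add_one_le, ← Nat.lt_iff_add_one_le, Nat.lt_iff_add_one_le]
    have : p.natDegree ≤ k - 2 := by
      rw [Polynomial.natDegree_le_iff_coeff_eq_zero]
      intro N hN
      have hcX : (Polynomial.X ^ k : ℝ[X]).coeff N = if N = k then 1 else 0 :=
        Polynomial.coeff_X_pow k N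
      simp only [hp, Polynomial.coeff_sub, Polynomial.coeff_map, hcX]
      rcases lt_trichotomy N k with h | h | h
      · have hN' : N = k - 1 := by omega
        have hz : (hermite k).coeff N = 0 := by
          rw [hN']
          exact coeff_hermite_of_odd_add ⟨k - 1, by omega⟩
        simp [hz, h.ne]
      · have hz : (hermite k).coeff N = 1 := by rw [h]; exact coeff_hermite_self k
        simp [hz, h]
      · have hz : (hermite k).coeff N = 0 := coeff_hermite_of_lt h
        simp [hz, h.ne']
    omega
  have heval : ∀ x : ℝ, (Polynomial.aeval x) (Polynomial.hermite k) - x ^ k = p.eval x := by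
    intro x
    simp only [hp, Polynomial.eval_sub, Polynomial.eval_pow, Polynomial.eval_X,
      Polynomial.aeval_def, Polynomial.eval₂_eq_eval_map]
    norm_num [algebraMap_int_eq]
  refine ⟨∑ i ∈ Finset.range (k - 1), |p.coeff i|, Finset.sum_nonneg fun i _ => abs_nonneg _,
    fun x hx => ?_⟩
  rw [heval, Polynomial.eval_eq_sum_range' hdeg]
  refine le_trans (Finset.abs_sum_le_sum_abs _ _) ?_
  rw [Finset.sum_mul]
  refine Finset.sum_le_sum fun i hi => ?_
  rw [abs_mul, abs_pow, abs_of_nonneg (by linarith : (0:ℝ) ≤ x)]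
  have hxi : x ^ i ≤ x ^ (k - 2) := pow_le_pow_right₀ hx (by
    have := Finset.mem_range.mp hi; omega)
  exact mul_le_mul_of_nonneg_left hxi (abs_nonneg _)

lemma gauss_tail (t : ℝ) (ht : 0 ≤ t) :
    ENNReal.ofReal (Real.exp (-t ^ 2 / 2) / (Real.sqrt (2 * π) * Real.exp (3 / 2) * (t + 1)))
      ≤ gaussianReal 0 1 {x : ℝ | t < x} := by
  have ht1 : (0:ℝ) < t + 1 := by linarith
  set δ : ℝ := 1 / (t + 1) with hδdef
  have hδ : 0 < δ := by positivity
  have hδ1 : δ ≤ 1 := by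
    rw [hδdef, div_le_one ht1]; linarith
  have htδ : t * δ ≤ 1 := by
    rw [hδdef, mul_one_div, div_le_one ht1]; linarith
  set c : ℝ := (Real.sqrt (2 * π))⁻¹ * Real.exp (-(t ^ 2 + 3) / 2) with hc
  have hsub : Set.Ioc t (t + δ) ⊆ {x : ℝ | t < x} := fun x hx => hx.1
  refine le_trans ?_ (measure_mono hsub)
  rw [gaussianReal_apply 0 one_ne_zero]
  have hpw : ∀ x ∈ Set.Ioc t (t + δ), ENNReal.ofReal c ≤ gaussianPDF 0 1 x := by
    intro x hx
    rw [gaussianPDF]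
    apply ENNReal.ofReal_le_ofReal
    have hxexpr : gaussianPDFReal 0 1 x = (Real.sqrt (2 * π))⁻¹ * Real.exp (-x ^ 2 / 2) := by
      simp [gaussianPDFReal]
    rw [hxexpr, hc]
    have hx2 : x ^ 2 ≤ t ^ 2 + 3 := by
      have h1 : x ≤ t + δ := hx.2
      have h2 : 0 ≤ x := le_of_lt (lt_of_le_of_lt ht hx.1)
      nlinarith
    have : Real.exp (-(t ^ 2 + 3) / 2) ≤ Real.exp (-x ^ 2 / 2) := by
      apply Real.exp_le_exp.mpr; linarith
    have hs : (0:ℝ) ≤ (Real.sqrt (2 * π))⁻¹ := by positivity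
    exact mul_le_mul_of_nonneg_left this hs
  have hlow : ENNReal.ofReal c * volume (Set.Ioc t (t + δ)) ≤
      ∫⁻ x in Set.Ioc t (t + δ), gaussianPDF 0 1 x := by
    rw [← setLIntegral_const]
    exact setLIntegral_mono (measurable_gaussianPDF 0 1) hpw
  refine le_trans ?_ hlow
  rw [Real.volume_Ioc, show t + δ - t = δ by ring, ← ENNReal.ofReal_mul (by positivity)]
  apply ENNReal.ofReal_le_ofReal
  have hπ : (0:ℝ) < Real.sqrt (2 * π) := Real.sqrt_pos.mpr (by positivity)
  rw [hc, hδdef]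
  rw [show -(t ^ 2 + 3) / 2 = -t ^ 2 / 2 + (-(3 / 2)) by ring, Real.exp_add, Real.exp_neg]
  apply le_of_eq
  field_simp

/-- For a standard normal random variable `η` and an integer `k ≥ 2` there is a constant
`C̄ > 0` such that `P(|H_k(η)| > u) ≥ C̄ exp(−u^(2/k)/2)/(u^(1/k)+1)` for all `u > 0`,
where `H_k` is the `k`-th (probabilists') Hermite polynomial with leading coefficient 1. -/
theorem hermite_tail_lower_bound (k : ℕ) (hk : 2 ≤ k) :
    ∃ C > (0 : ℝ), ∀ u > (0 : ℝ),
      ENNReal.ofReal (C * Real.exp (-(u ^ ((2 : ℝ) / k)) / 2) / (u ^ ((1 : ℝ) / k) + 1))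
        ≤ gaussianReal 0 1 {x : ℝ | u < |(Polynomial.aeval x) (Polynomial.hermite k)|} := by
  obtain ⟨C₀, hC₀, hherm⟩ := herm_approx k hk
  set C₁ : ℝ := C₀ + 1 with hC₁def
  have hC₁ : (1:ℝ) ≤ C₁ := by linarith
  have hC₁0 : (0:ℝ) < C₁ := by linarith
  set D : ℝ := Real.sqrt (2 * π) * Real.exp (3 / 2) with hD
  have hDpos : 0 < D := by
    have : (0:ℝ) < Real.sqrt (2 * π) := Real.sqrt_pos.mpr (by positivity)
    positivity
  refine ⟨Real.exp (-C₁ / 2) / (D * (Real.sqrt C₁ + 1)), by positivity, fun u hu => ?_⟩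
  set a : ℝ := u ^ ((1:ℝ) / k) with ha
  have hkR : (k:ℝ) ≠ 0 := by positivity
  have hapos : 0 < a := Real.rpow_pos_of_pos hu _
  have hak : a ^ k = u := by
    rw [ha, ← Real.rpow_natCast (u ^ ((1:ℝ)/k)) k, ← Real.rpow_mul hu.le]
    rw [one_div, inv_mul_cancel₀ hkR, Real.rpow_one]
  have ha2 : u ^ ((2:ℝ) / k) = a ^ 2 := by
    rw [ha, ← Real.rpow_natCast (u ^ ((1:ℝ)/k)) 2, ← Real.rpow_mul hu.le]
    congr 1
    push_cast
    ring
  set t : ℝ := Real.sqrt (a ^ 2 + C₁) with htdef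
  have ht0 : 0 ≤ t := Real.sqrt_nonneg _
  have ht2 : t ^ 2 = a ^ 2 + C₁ := Real.sq_sqrt (by positivity)
  have hta : a ≤ t := by
    rw [htdef]
    calc a = Real.sqrt (a ^ 2) := by rw [Real.sqrt_sq hapos.le]
    _ ≤ _ := Real.sqrt_le_sqrt (by linarith)
  have ht1 : 1 ≤ t := by
    nlinarith
  have hsC : Real.sqrt C₁ ^ 2 = C₁ := Real.sq_sqrt hC₁0.le
  have hsC0 : (0:ℝ) ≤ Real.sqrt C₁ := Real.sqrt_nonneg _
  have htub : t ≤ a + Real.sqrt C₁ := by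
    rw [htdef]
    calc Real.sqrt (a ^ 2 + C₁) ≤ Real.sqrt ((a + Real.sqrt C₁) ^ 2) :=
          Real.sqrt_le_sqrt (by nlinarith)
    _ = a + Real.sqrt C₁ := Real.sqrt_sq (by positivity)
  -- set inclusion
  have hsub : {x : ℝ | t < x} ⊆ {x : ℝ | u < |(Polynomial.aeval x) (Polynomial.hermite k)|} := by
    intro x hx
    simp only [Set.mem_setOf_eq] at hx ⊢
    have hx1 : (1:ℝ) ≤ x := le_of_lt (lt_of_le_of_lt ht1 hx)
    have hx0 : (0:ℝ) < x := by linarith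
    have hb := hherm x hx1
    have habs := abs_le.mp hb
    have hxk : x ^ k = x ^ (k - 2) * x ^ 2 := by
      rw [← pow_add]; congr 1; omega
    have hx2 : t ^ 2 < x ^ 2 := by nlinarith
    have hxk2pos : (0:ℝ) < x ^ (k - 2) := by positivity
    have hxk2 : a ^ (k - 2) ≤ x ^ (k - 2) :=
      pow_le_pow_left₀ hapos.le (le_trans hta hx.le) _
    have key : u < (Polynomial.aeval x) (Polynomial.hermite k) := by
      have h1 : x ^ (k - 2) * (x ^ 2 - C₀) ≤ (Polynomial.aeval x) (Polynomial.hermite k) := by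
        have := habs.1
        nlinarith
      have h2 : u < x ^ (k - 2) * (x ^ 2 - C₀) := by
        have hu' : u = a ^ (k - 2) * a ^ 2 := by
          rw [← pow_add, ← hak]; congr 1; omega
        have hx2' : a ^ 2 + 1 < x ^ 2 - C₀ := by
          rw [ht2] at hx2; simp only [hC₁def] at hx2; linarith
        have hak2pos : (0:ℝ) < a ^ (k - 2) := by positivity
        nlinarith
      linarith
    exact lt_of_lt_of_le key (le_abs_self _)
  refine le_trans ?_ (le_trans (gauss_tail t ht0) (measure_mono hsub))
  apply ENNReal.ofReal_le_ofReal
  rw [ha2]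
  have hE : Real.exp (-t ^ 2 / 2) = Real.exp (-C₁ / 2) * Real.exp (-a ^ 2 / 2) := by
    rw [← Real.exp_add, ht2]; ring_nf
  have heq : Real.exp (-C₁ / 2) / (D * (Real.sqrt C₁ + 1)) * Real.exp (-(a ^ 2) / 2) / (a + 1)
      = Real.exp (-t ^ 2 / 2) / (D * ((Real.sqrt C₁ + 1) * (a + 1))) := by
    rw [hE]
    have h1 : (0:ℝ) < a + 1 := by linarith
    field_simp
  rw [heq]
  have hfin : D * (t + 1) ≤ D * ((Real.sqrt C₁ + 1) * (a + 1)) := by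
    have : t + 1 ≤ (Real.sqrt C₁ + 1) * (a + 1) := by nlinarith
    exact mul_le_mul_of_nonneg_left this hDpos.le
  have hpos : (0:ℝ) < D * (t + 1) := by positivity
  gcongr
end

section
/- For a standard normal random variable η and constants k ≥ 2, D > 0, there exist positive constants A and B such that for all t > B, P(|η|^k − D|η|^{k−2} > t) ≥ P(|η|^k > t + A·t^{(k−2)/k}). -/
open MeasureTheory ProbabilityTheory

set_option maxHeartbeats 1000000 in
/-- For a standard normal random variable `η`, an integer `k ≥ 2` and a constant `D > 0`
there exist positive constants `A` and `B` such that for all `t > B`,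
`P(|η|^k − D|η|^(k−2) > t) ≥ P(|η|^k > t + A t^((k−2)/k))`. -/
theorem gaussian_power_tail_comparison (k : ℕ) (hk : 2 ≤ k) (D : ℝ) (hD : 0 < D) :
    ∃ A > (0 : ℝ), ∃ B > (0 : ℝ), ∀ t : ℝ, B < t →
      gaussianReal 0 1 {x : ℝ | t + A * t ^ (((k : ℝ) - 2) / k) < |x| ^ k}
        ≤ gaussianReal 0 1 {x : ℝ | t < |x| ^ k - D * |x| ^ (k - 2)} := by
  refine ⟨2 * D, by linarith, (2 * D + 1) ^ k, by positivity, fun t ht => ?_⟩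
  apply measure_mono
  intro x hx
  simp only [Set.mem_setOf_eq] at hx ⊢
  set y := |x| with hy
  have hy0 : 0 ≤ y := abs_nonneg x
  have hB1 : (1 : ℝ) ≤ (2 * D + 1) ^ k := one_le_pow₀ (by linarith)
  have ht1 : (1 : ℝ) < t := lt_of_le_of_lt hB1 ht
  have ht0 : (0 : ℝ) < t := by linarith
  set e : ℝ := ((k : ℝ) - 2) / k with he
  have hk0 : (0 : ℝ) < (k : ℝ) := by positivity
  have he0 : 0 ≤ e := by
    apply div_nonneg _ (le_of_lt hk0)
    have : (2 : ℝ) ≤ (k : ℝ) := by exact_mod_cast hk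
    linarith
  have hte : (0 : ℝ) < t ^ e := Real.rpow_pos_of_pos ht0 e
  by_cases hcase : y ^ (k - 2) ≤ 2 * t ^ e
  · have h1 : D * y ^ (k - 2) ≤ 2 * D * t ^ e := by nlinarith
    linarith
  · push_neg at hcase
    have hk3 : 3 ≤ k := by
      by_contra h
      have hk2 : k = 2 := by omega
      subst hk2
      have he' : e = 0 := by norm_num [he]
      rw [he'] at hcase
      simp [Real.rpow_zero] at hcase
    have hkm2 : (0 : ℝ) < (k : ℝ) - 2 := by
      have : (3 : ℝ) ≤ (k : ℝ) := by exact_mod_cast hk3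
      linarith
    have hcast : ((k - 2 : ℕ) : ℝ) = (k : ℝ) - 2 := by
      push_cast [Nat.cast_sub hk]
      ring
    have hyr : y ^ (k - 2) = y ^ ((k : ℝ) - 2) := by
      rw [← Real.rpow_natCast y (k - 2), hcast]
    set p : ℝ := (k : ℝ) / ((k : ℝ) - 2) with hp
    have hp1 : 1 ≤ p := by
      rw [hp, le_div_iff₀ hkm2]; linarith
    have hp0 : 0 < p := lt_of_lt_of_le one_pos hp1
    -- raise hcase to the power p
    have hstep : (2 * t ^ e) ^ p < (y ^ (k - 2) : ℝ) ^ p := by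
      apply Real.rpow_lt_rpow (by positivity) hcase hp0
    have hrhs : (y ^ (k - 2) : ℝ) ^ p = y ^ k := by
      rw [hyr, ← Real.rpow_natCast y k, ← Real.rpow_mul hy0]
      congr 1
      rw [hp]; field_simp
    have hlhs : (2 * t ^ e) ^ p = 2 ^ p * t := by
      rw [Real.mul_rpow (by norm_num) (le_of_lt hte), ← Real.rpow_mul (le_of_lt ht0)]
      have : e * p = 1 := by
        rw [he, hp]; field_simp
      rw [this, Real.rpow_one]
    have h2p : (2 : ℝ) ≤ 2 ^ p := by
      calc (2 : ℝ) = 2 ^ (1 : ℝ) := (Real.rpow_one 2).symm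
      _ ≤ 2 ^ p := Real.rpow_le_rpow_left_iff (by norm_num) |>.mpr hp1
    have hy2t : 2 * t < y ^ k := by
      rw [hrhs, hlhs] at hstep
      nlinarith
    -- y > 2D + 1
    have htB : ((2 * D + 1) ^ k : ℝ) ^ e ≤ t ^ e :=
      Real.rpow_le_rpow (by positivity) (le_of_lt ht) he0
    have hBe : ((2 * D + 1) ^ k : ℝ) ^ e = (2 * D + 1) ^ (k - 2) := by
      rw [← Real.rpow_natCast (2 * D + 1) k, ← Real.rpow_mul (by linarith),
        ← Real.rpow_natCast (2 * D + 1) (k - 2), hcast]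
      congr 1
      rw [he]; field_simp
    have hylarge : (2 * D + 1) ^ (k - 2) < y ^ (k - 2) := by
      rw [← hBe]
      nlinarith [Real.rpow_pos_of_pos (show (0:ℝ) < (2*D+1)^k by positivity) e]
    have hygt : 2 * D + 1 < y := lt_of_pow_lt_pow_left₀ (k - 2) hy0 hylarge
    have hy2 : 2 * D ≤ y ^ 2 := by nlinarith
    have hyk : y ^ (k - 2) * y ^ 2 = y ^ k := by
      rw [← pow_add]
      congr 1
      omega
    have hu0 : 0 ≤ y ^ (k - 2) := pow_nonneg hy0 (k - 2)
    have h6 : 0 ≤ y ^ (k - 2) * (y ^ 2 - 2 * D) := mul_nonneg hu0 (sub_nonneg.2 hy2)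
    have h5 : 2 * (D * y ^ (k - 2)) ≤ y ^ k := by
      nlinarith [h6, hyk]
    linarith [h5, hy2t]
end
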